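/- Let r, p, n, k be positive integers with p dividing r. Then the set {φ_k(x_d) : d ∈ Π_k(r,p,n)} is a ℂ-basis of the centralizer algebra End_{G(r,p,n)}(V^{⊗k}) = {F ∈ End(V^{⊗k}) : F ∘ g^{⊗k} = g^{⊗k} ∘ F for all g ∈ G(r,p,n)}. -/

import Mathlib

open scoped Classical
open Matrix

noncomputable section

namespace Tanabe

/-! ## Tensor space model of `V^{⊗k}` for `V = ℂ^n`.
A tensor is encoded by its coordinates, i.e. a function `(Fin k → Fin n) → ℂ`;
the basis vector `v_{i_1} ⊗ ⋯ ⊗ v_{i_k}` corresponds to the indicator function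
of the tuple `(i_1, …, i_k)`. -/

abbrev TP (n k : ℕ) : Type := (Fin k → Fin n) → ℂ

/-- The linear endomorphism of `V^{⊗k}` with matrix `K` in the standard basis:
it sends the basis vector indexed by the tuple `i` to `∑ₒ K o i • (basis vector o)`. -/
def kernelMap (n k : ℕ) (K : (Fin k → Fin n) → (Fin k → Fin n) → ℂ) :
    TP n k →ₗ[ℂ] TP n k where
  toFun f := fun o => ∑ i : Fin k → Fin n, K o i * f i
  map_add' f g := by
    funext o
    simp only [Pi.add_apply, mul_add]
    exact Finset.sum_add_distrib
  map_smul' c f := by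
    funext o
    simp only [Pi.smul_apply, smul_eq_mul, RingHom.id_apply]
    rw [Finset.mul_sum]
    exact Finset.sum_congr rfl fun i _ => by ring

/-- The diagonal (tensor-power) action `g^{⊗k}` of a matrix `g` on `V^{⊗k}`. -/
def tensorPow (n k : ℕ) (g : Matrix (Fin n) (Fin n) ℂ) : TP n k →ₗ[ℂ] TP n k :=
  kernelMap n k fun o i => ∏ t : Fin k, g (o t) (i t)

/-! ## Set partitions of `{1,…,t,1′,…,t′}`.
A set partition of `{1,…,t,1′,…,t′}` is encoded as a `Setoid` on `Fin t ⊕ Fin t`,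
with `Sum.inl` the unprimed (top row) elements and `Sum.inr` the primed (bottom row)
elements; blocks are the equivalence classes. -/

abbrev SP (t : ℕ) : Type := Setoid (Fin t ⊕ Fin t)

/-- `N(B)`: number of top-row (unprimed) elements in the block `q` of `d`. -/
def topCt {t : ℕ} (d : SP t) (q : Quotient d) : ℕ :=
  Nat.card {a : Fin t // Quotient.mk d (Sum.inl a) = q}

/-- `M(B)`: number of bottom-row (primed) elements in the block `q` of `d`. -/
def botCt {t : ℕ} (d : SP t) (q : Quotient d) : ℕ :=
  Nat.card {a : Fin t // Quotient.mk d (Sum.inr a) = q}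

/-- `|d|`: the number of blocks of `d`. -/
def nBlocks {t : ℕ} (d : SP t) : ℕ := Nat.card (Quotient d)

/-- Coefficient of `φ_t(x_d)`: equals `1` if the equalities among the values of the
combined tuple `c` are *exactly* those prescribed by `d`, and `0` otherwise. -/
def coeX (n t : ℕ) (d : SP t) (c : Fin t ⊕ Fin t → Fin n) : ℂ :=
  if ∀ a b : Fin t ⊕ Fin t, d.r a b ↔ c a = c b then 1 else 0

/-- Coefficient of `φ_t(d)` (the diagram basis): equals `1` if the values of the
combined tuple `c` agree on each block of `d`, and `0` otherwise. -/
def coeD (n t : ℕ) (d : SP t) (c : Fin t ⊕ Fin t → Fin n) : ℂ :=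
  if ∀ a b : Fin t ⊕ Fin t, d.r a b → c a = c b then 1 else 0

/-- The operator `φ_t(x_d)` on `V^{⊗t}`. -/
def phiX (n t : ℕ) (d : SP t) : TP n t →ₗ[ℂ] TP n t :=
  kernelMap n t fun o i => coeX n t d (Sum.elim i o)

/-- The operator `φ_t(d)` on `V^{⊗t}` (diagram basis). -/
def phiD (n t : ℕ) (d : SP t) : TP n t →ₗ[ℂ] TP n t :=
  kernelMap n t fun o i => coeD n t d (Sum.elim i o)

/-- `d ∈ Π_t(r)` : every block `B` satisfies `N(B) ≡ M(B) (mod r)`. -/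
def inPi (r : ℕ) {t : ℕ} (d : SP t) : Prop :=
  ∀ q : Quotient d, (topCt d q : ℤ) ≡ (botCt d q : ℤ) [ZMOD (r : ℤ)]

/-- `d ∈ Λ_t(r,p,n)` (here `m = r/p`). -/
def inLambda (r p n : ℕ) {t : ℕ} (d : SP t) : Prop :=
  nBlocks d = n ∧
  (∀ q : Quotient d,
    ((topCt d q : ℤ) ≡ (botCt d q : ℤ) [ZMOD ((r / p : ℕ) : ℤ)]) ∧
    ¬ ((topCt d q : ℤ) ≡ (botCt d q : ℤ) [ZMOD (r : ℤ)])) ∧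
  (∀ q q' : Quotient d,
    (topCt d q : ℤ) - (botCt d q : ℤ) ≡ (topCt d q' : ℤ) - (botCt d q' : ℤ) [ZMOD (r : ℤ)])

/-- `d ∈ Θ_t(r,p,n)` (here `m = r/p`). -/
def inTheta (r p n : ℕ) {t : ℕ} (d : SP t) : Prop :=
  n < nBlocks d ∧
  (∀ q : Quotient d, (topCt d q : ℤ) ≡ (botCt d q : ℤ) [ZMOD ((r / p : ℕ) : ℤ)]) ∧
  ∃ q : Quotient d, ¬ ((topCt d q : ℤ) ≡ (botCt d q : ℤ) [ZMOD (r : ℤ)])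

/-- `d ∈ A_t(r,p,n) = Π_t(r) ∪ Λ_t(r,p,n) ∪ Θ_t(r,p,n)`. -/
def inA (r p n : ℕ) {t : ℕ} (d : SP t) : Prop :=
  inPi r d ∨ inLambda r p n d ∨ inTheta r p n d

/-- `d ∈ A_{k+1/2}` : `k+1` and `(k+1)′` lie in the same block. -/
def isHalf (k : ℕ) (d : SP (k + 1)) : Prop :=
  d.r (Sum.inl (Fin.last k)) (Sum.inr (Fin.last k))

/-- `d ∈ Π_t(r,p,n)` : `d ∈ A_t(r,p,n)` with at most `n` blocks. -/
def inPiRPN (r p n : ℕ) {t : ℕ} (d : SP t) : Prop :=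
  inA r p n d ∧ nBlocks d ≤ n

/-- `{φ_k(x_d) : d ∈ A_k(r,p,n)}`. -/
def TanSet (r p n k : ℕ) : Set (TP n k →ₗ[ℂ] TP n k) :=
  {T | ∃ d : SP k, inA r p n d ∧ T = phiX n k d}

/-- `{φ_{k+1}(x_d) : d ∈ A_{k+1/2}(r,p,n)}` (as endomorphisms of `V^{⊗(k+1)}`). -/
def TanSetHalf (r p n k : ℕ) : Set (TP n (k + 1) →ₗ[ℂ] TP n (k + 1)) :=
  {T | ∃ d : SP (k + 1), (inA r p n d ∧ isHalf k d) ∧ T = phiX n (k + 1) d}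

/-! ## The groups `G(r,p,n)` and `L(r,p,n)` as matrix groups. -/

/-- The monomial matrix with underlying permutation `π` and weights `a` :
its `(i,j)` entry is `a j` if `i = π j` and `0` otherwise, so that it maps
`v_j ↦ a j • v_{π j}`. -/
def monoMat (n : ℕ) (π : Equiv.Perm (Fin n)) (a : Fin n → ℂ) :
    Matrix (Fin n) (Fin n) ℂ :=
  Matrix.of fun i j => if i = π j then a j else 0

/-- `G(r,p,n)` as a set of matrices: matrices with exactly one nonzero entry in each
row and column, whose nonzero entries are `r`-th roots of unity, and such that the
`m = r/p`-th power of the product of the nonzero entries is `1`. -/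
def GSet (r p n : ℕ) : Set (Matrix (Fin n) (Fin n) ℂ) :=
  {g | ∃ (π : Equiv.Perm (Fin n)) (a : Fin n → ℂ),
    (∀ i, a i ^ r = 1) ∧ (∏ i, a i) ^ (r / p) = 1 ∧ g = monoMat n π a}

/-- The last index of `Fin n` (position `n` in 1-indexed notation). -/
def lastIdx (n : ℕ) (hn : 0 < n) : Fin n := ⟨n - 1, by omega⟩

/-- `L(r,p,n)` as a set of matrices: elements of `G(r,p,n)` whose `(n,n)` entry
is nonzero. -/
def LSet (r p n : ℕ) (hn : 0 < n) : Set (Matrix (Fin n) (Fin n) ℂ) :=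
  {g | g ∈ GSet r p n ∧ g (lastIdx n hn) (lastIdx n hn) ≠ 0}

/-- The centralizer algebra `End_{G(r,p,n)}(V^{⊗k})`. -/
def centG (r p n k : ℕ) : Set (TP n k →ₗ[ℂ] TP n k) :=
  {F | ∀ g ∈ GSet r p n, F ∘ₗ tensorPow n k g = tensorPow n k g ∘ₗ F}

/-- The subspace `W = V^{⊗k} ⊗ ℂ v_n` of `V^{⊗(k+1)}` : coordinate functions
supported on tuples whose last entry is the last index. -/
def Wsub (n k : ℕ) (hn : 0 < n) : Submodule ℂ (TP n (k + 1)) where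
  carrier := {f | ∀ j : Fin (k + 1) → Fin n, j (Fin.last k) ≠ lastIdx n hn → f j = 0}
  add_mem' := by
    intro a b ha hb j hj
    simp [Pi.add_apply, ha j hj, hb j hj]
  zero_mem' := by intro j hj; rfl
  smul_mem' := by
    intro c a ha j hj
    simp [Pi.smul_apply, ha j hj]


/-! ## Group structure -/

abbrev GLn (n : ℕ) := Matrix.GeneralLinearGroup (Fin n) ℂ

lemma monoMat_mul (n : ℕ) (π σ : Equiv.Perm (Fin n)) (a b : Fin n → ℂ) :
    monoMat n π a * monoMat n σ b = monoMat n (π * σ) (fun j => a (σ j) * b j) := by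
  ext i j
  simp only [monoMat, Matrix.mul_apply, Matrix.of_apply, mul_ite, mul_zero, ite_mul, zero_mul]
  rw [Finset.sum_ite_eq' Finset.univ (σ j)]
  simp [Equiv.Perm.mul_apply]
  congr 1

lemma monoMat_one (n : ℕ) : monoMat n 1 (fun _ => (1 : ℂ)) = 1 := by
  ext i j
  simp [monoMat, Matrix.one_apply]
  congr 1

lemma one_mem_GSet (r p n : ℕ) : (1 : Matrix (Fin n) (Fin n) ℂ) ∈ GSet r p n :=
  ⟨1, fun _ => 1, fun _ => one_pow r, by simp, (monoMat_one n).symm⟩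

lemma mul_mem_GSet {r p n : ℕ} {g h : Matrix (Fin n) (Fin n) ℂ}
    (hg : g ∈ GSet r p n) (hh : h ∈ GSet r p n) : g * h ∈ GSet r p n := by
  obtain ⟨π, a, ha, hpa, rfl⟩ := hg
  obtain ⟨σ, b, hb, hpb, rfl⟩ := hh
  refine ⟨π * σ, fun j => a (σ j) * b j, fun i => by rw [mul_pow, ha, hb, one_mul], ?_,
    monoMat_mul n π σ a b⟩
  have h1 : (∏ i, (a (σ i) * b i)) = (∏ i, a i) * ∏ i, b i := by
    rw [Finset.prod_mul_distrib, Equiv.prod_comp σ a]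
  rw [h1, mul_pow, hpa, hpb, one_mul]

lemma a_ne_zero {r : ℕ} (hr : 0 < r) {a : ℂ} (ha : a ^ r = 1) : a ≠ 0 := by
  intro h0
  rw [h0, zero_pow hr.ne'] at ha
  exact zero_ne_one ha

lemma monoMat_mul_inv (n : ℕ) (π : Equiv.Perm (Fin n)) (a : Fin n → ℂ)
    (ha : ∀ i, a i ≠ 0) :
    monoMat n π a * monoMat n π⁻¹ (fun j => (a (π⁻¹ j))⁻¹) = 1 := by
  simp only [monoMat_mul]
  rw [mul_inv_cancel,
    show (fun j => a (π⁻¹ j) * (a (π⁻¹ j))⁻¹) = fun _ : Fin n => (1 : ℂ) from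
      funext fun j => mul_inv_cancel₀ (ha _),
    monoMat_one]

/-- The value of the inverse of a unit whose underlying matrix is a monomial matrix. -/
lemma gl_inv_val {n : ℕ} (g : GLn n) (π : Equiv.Perm (Fin n)) (a : Fin n → ℂ)
    (ha : ∀ i, a i ≠ 0) (hg : (↑g : Matrix (Fin n) (Fin n) ℂ) = monoMat n π a) :
    (↑g⁻¹ : Matrix (Fin n) (Fin n) ℂ) = monoMat n π⁻¹ (fun j => (a (π⁻¹ j))⁻¹) := by
  have hmul : (↑g : Matrix (Fin n) (Fin n) ℂ) *
      monoMat n π⁻¹ (fun j => (a (π⁻¹ j))⁻¹) = 1 := by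
    rw [hg]; exact monoMat_mul_inv n π a ha
  calc (↑g⁻¹ : Matrix (Fin n) (Fin n) ℂ)
      = ↑g⁻¹ * ((↑g : Matrix (Fin n) (Fin n) ℂ) *
          monoMat n π⁻¹ (fun j => (a (π⁻¹ j))⁻¹)) := by rw [hmul, mul_one]
    _ = ((↑g⁻¹ : Matrix (Fin n) (Fin n) ℂ) * ↑g) *
          monoMat n π⁻¹ (fun j => (a (π⁻¹ j))⁻¹) := by rw [mul_assoc]
    _ = monoMat n π⁻¹ (fun j => (a (π⁻¹ j))⁻¹) := by
          rw [← Units.val_mul, inv_mul_cancel, Units.val_one, one_mul]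

lemma inv_mem_GSet {r p n : ℕ} (hr : 0 < r) {g : GLn n}
    (hg : (↑g : Matrix (Fin n) (Fin n) ℂ) ∈ GSet r p n) :
    (↑g⁻¹ : Matrix (Fin n) (Fin n) ℂ) ∈ GSet r p n := by
  obtain ⟨π, a, ha, hpa, hgm⟩ := hg
  have hane : ∀ i, a i ≠ 0 := fun i => a_ne_zero hr (ha i)
  refine ⟨π⁻¹, fun j => (a (π⁻¹ j))⁻¹, fun i => by rw [inv_pow, ha, inv_one], ?_,
    gl_inv_val g π a hane hgm⟩
  rw [Finset.prod_inv_distrib, Equiv.prod_comp π⁻¹ a, inv_pow, hpa, inv_one]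

/-- The complex reflection group `G(r,p,n)` as a subgroup of `GL_n(ℂ)`. -/
def GGroup (r p n : ℕ) (hr : 0 < r) : Subgroup (GLn n) where
  carrier := {g | (↑g : Matrix (Fin n) (Fin n) ℂ) ∈ GSet r p n}
  one_mem' := by
    show (↑(1 : GLn n) : Matrix (Fin n) (Fin n) ℂ) ∈ GSet r p n
    rw [Units.val_one]; exact one_mem_GSet r p n
  mul_mem' := by
    intro g h hg hh
    show (↑(g * h) : Matrix (Fin n) (Fin n) ℂ) ∈ GSet r p n
    rw [Units.val_mul]; exact mul_mem_GSet hg hh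
  inv_mem' := by
    intro g hg
    exact inv_mem_GSet hr hg

lemma monoMat_last {n : ℕ} (hn : 0 < n) (π : Equiv.Perm (Fin n)) (a : Fin n → ℂ)
    (h : monoMat n π a (lastIdx n hn) (lastIdx n hn) ≠ 0) :
    π (lastIdx n hn) = lastIdx n hn ∧ a (lastIdx n hn) ≠ 0 := by
  by_cases hp : lastIdx n hn = π (lastIdx n hn)
  · refine ⟨hp.symm, ?_⟩
    intro h0
    apply h
    simp [monoMat, ← hp, h0]
  · exfalso; apply h; simp [monoMat, hp]

lemma monoMat_last_entry {n : ℕ} (hn : 0 < n) (π : Equiv.Perm (Fin n)) (a : Fin n → ℂ)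
    (hp : π (lastIdx n hn) = lastIdx n hn) :
    monoMat n π a (lastIdx n hn) (lastIdx n hn) = a (lastIdx n hn) := by
  simp [monoMat, hp]

/-- The subgroup `L(r,p,n)` of `G(r,p,n)` (matrices with nonzero `(n,n)` entry). -/
def LGroup (r p n : ℕ) (hr : 0 < r) (hn : 0 < n) : Subgroup (GLn n) where
  carrier := {g | (↑g : Matrix (Fin n) (Fin n) ℂ) ∈ LSet r p n hn}
  one_mem' := by
    refine ⟨?_, ?_⟩
    · show (↑(1 : GLn n) : Matrix (Fin n) (Fin n) ℂ) ∈ GSet r p n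
      rw [Units.val_one]; exact one_mem_GSet r p n
    · rw [Units.val_one]
      simp [Matrix.one_apply]
  mul_mem' := by
    rintro g h ⟨hg, hge⟩ ⟨hh, hhe⟩
    refine ⟨?_, ?_⟩
    · show (↑(g * h) : Matrix (Fin n) (Fin n) ℂ) ∈ GSet r p n
      rw [Units.val_mul]; exact mul_mem_GSet hg hh
    · obtain ⟨π, a, ha, hpa, hgm⟩ := hg
      obtain ⟨σ, b, hb, hpb, hhm⟩ := hh
      rw [hgm] at hge
      rw [hhm] at hhe
      obtain ⟨hπ, ha0⟩ := monoMat_last hn π a hge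
      obtain ⟨hσ, hb0⟩ := monoMat_last hn σ b hhe
      rw [Units.val_mul, hgm, hhm, monoMat_mul]
      rw [monoMat_last_entry hn _ _ (by simp [Equiv.Perm.mul_apply, hσ, hπ])]
      simp only [hσ]
      exact mul_ne_zero ha0 hb0
  inv_mem' := by
    rintro g ⟨hg, hge⟩
    obtain ⟨π, a, ha, hpa, hgm⟩ := hg
    have hane : ∀ i, a i ≠ 0 := fun i => a_ne_zero hr (ha i)
    rw [hgm] at hge
    obtain ⟨hπ, ha0⟩ := monoMat_last hn π a hge
    refine ⟨inv_mem_GSet hr ⟨π, a, ha, hpa, hgm⟩, ?_⟩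
    rw [gl_inv_val g π a hane hgm]
    have hπi : π⁻¹ (lastIdx n hn) = lastIdx n hn := by
      conv_lhs => rw [← hπ]
      simp
    rw [monoMat_last_entry hn _ _ hπi]
    simp only [hπi]
    exact inv_ne_zero ha0

lemma GGroup_le (r p n : ℕ) (hr : 0 < r) : GGroup r p n hr ≤ GGroup r 1 n hr := by
  rintro g ⟨π, a, ha, hpa, hgm⟩
  refine ⟨π, a, ha, ?_, hgm⟩
  rw [Nat.div_one, ← Finset.prod_pow]
  simp [ha]

lemma LGroup_le (r p n : ℕ) (hr : 0 < r) (hn : 0 < n) :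
    LGroup r p n hr hn ≤ LGroup r 1 n hr hn := by
  rintro g ⟨hg, hge⟩
  exact ⟨GGroup_le r p n hr hg, hge⟩

lemma LGroup_le_GGroup (r p n : ℕ) (hr : 0 < r) (hn : 0 < n) :
    LGroup r p n hr hn ≤ GGroup r p n hr := fun _ hg => hg.1

lemma LGroup_le_G1 (r p n : ℕ) (hr : 0 < r) (hn : 0 < n) :
    LGroup r p n hr hn ≤ GGroup r 1 n hr :=
  le_trans (LGroup_le_GGroup r p n hr hn) (GGroup_le r p n hr)

/-! ## Representation-theoretic notions -/

section Reps

variable {G : Type*} [Monoid G] {V : Type*} [AddCommGroup V] [Module ℂ V]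

/-- A submodule invariant under a representation. -/
def RepInvariant (ρ : Representation ℂ G V) (q : Submodule ℂ V) : Prop :=
  ∀ (g : G), ∀ v ∈ q, ρ g v ∈ q

/-- Irreducibility of a representation. -/
def RepIrreducible (ρ : Representation ℂ G V) : Prop :=
  Nontrivial V ∧ ∀ q : Submodule ℂ V, RepInvariant ρ q → q = ⊥ ∨ q = ⊤

/-- Irreducibility of an invariant subspace, as a subrepresentation. -/
def SubIrreducible (ρ : Representation ℂ G V) (q : Submodule ℂ V) : Prop :=
  q ≠ ⊥ ∧ ∀ q' : Submodule ℂ V, q' ≤ q → RepInvariant ρ q' → q' = ⊥ ∨ q' = q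

/-- Two (invariant) subspaces are isomorphic as subrepresentations: there is a
`ℂ`-linear equivalence between them intertwining the action. -/
def IsSubrepIso (ρ : Representation ℂ G V) (q q' : Submodule ℂ V) : Prop :=
  ∃ e : q ≃ₗ[ℂ] q', ∀ (g : G) (x : V) (hx : x ∈ q) (hgx : ρ g x ∈ q),
    ((e ⟨ρ g x, hgx⟩ : q') : V) = ρ g ((e ⟨x, hx⟩ : q') : V)

/-- A representation is multiplicity free: it is an (internal) direct sum of
pairwise non-isomorphic irreducible subrepresentations. -/
def RepMultFree (ρ : Representation ℂ G V) : Prop :=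
  ∃ (ι : Type) (_ : Fintype ι) (W : ι → Submodule ℂ V),
    (∀ i, RepInvariant ρ (W i)) ∧
    (∀ i, SubIrreducible ρ (W i)) ∧
    iSupIndep W ∧ (⨆ i, W i) = ⊤ ∧
    (∀ i j, i ≠ j → ¬ IsSubrepIso ρ (W i) (W j))

/-- Restriction of a representation of `K` to a subgroup `H ≤ K`. -/
def restrictRep {G : Type*} [Group G] {H K : Subgroup G} (h : H ≤ K)
    (ρ : Representation ℂ ↥K V) : Representation ℂ ↥H V :=
  MonoidHom.comp ρ (Subgroup.inclusion h)

end Reps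

/-! ## The elements `ζ_i^l ζ_j^{-l} s_{ij}` and the central elements `κ` -/

/-- `ζ = exp(2πi/r)`, a primitive `r`-th root of unity. -/
def zeta (r : ℕ) : ℂ := Complex.exp (2 * Real.pi * Complex.I / r)

lemma zeta_pow_self {r : ℕ} (hr : 0 < r) : zeta r ^ r = 1 := by
  rw [zeta, ← Complex.exp_nat_mul]
  rw [show (r : ℂ) * (2 * Real.pi * Complex.I / r) = 2 * Real.pi * Complex.I by
    rw [mul_div_assoc']
    exact mul_div_cancel_left₀ _ (Nat.cast_ne_zero.mpr hr.ne')]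
  exact Complex.exp_two_pi_mul_I

lemma zeta_ne_zero (r : ℕ) : zeta r ≠ 0 := Complex.exp_ne_zero _

/-- Weights of the monomial matrix `ζ_i^l ζ_j^{-l} s_{ij}` : `ζ^l` in position `i`,
`ζ^{-l}` in position `j`, `1` elsewhere. -/
def zijWt (r l : ℕ) {n : ℕ} (i j : Fin n) : Fin n → ℂ :=
  fun t => if t = i then zeta r ^ l else if t = j then (zeta r ^ l)⁻¹ else 1

/-- The matrix `ζ_i^l ζ_j^{-l} s_{ij}`. -/
def zijMat (n r l : ℕ) (i j : Fin n) : Matrix (Fin n) (Fin n) ℂ :=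
  monoMat n (Equiv.swap i j) (zijWt r l i j)

lemma zijWt_ne_zero (r l : ℕ) {n : ℕ} (i j : Fin n) (t : Fin n) :
    zijWt r l i j t ≠ 0 := by
  unfold zijWt
  split_ifs
  · exact pow_ne_zero _ (zeta_ne_zero r)
  · exact inv_ne_zero (pow_ne_zero _ (zeta_ne_zero r))
  · exact one_ne_zero

lemma zijWt_pow {r l : ℕ} (hr : 0 < r) {n : ℕ} (i j : Fin n) (t : Fin n) :
    zijWt r l i j t ^ r = 1 := by
  unfold zijWt
  split_ifs
  · rw [← pow_mul, mul_comm, pow_mul, zeta_pow_self hr, one_pow]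
  · rw [inv_pow, ← pow_mul, mul_comm, pow_mul, zeta_pow_self hr, one_pow, inv_one]
  · exact one_pow r

lemma zijWt_prod {r l : ℕ} {n : ℕ} {i j : Fin n} (hij : i ≠ j) :
    (∏ t, zijWt r l i j t) = 1 := by
  have hfun : (fun t => zijWt r l i j t) =
      fun t => (if t = i then zeta r ^ l else 1) * (if t = j then (zeta r ^ l)⁻¹ else 1) := by
    funext t
    by_cases h1 : t = i <;> by_cases h2 : t = j
    · exact absurd (h1.symm.trans h2) hij
    · simp [zijWt, h1, h2, hij]
    · simp [zijWt, h1, h2, hij, Ne.symm hij]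
    · simp [zijWt, h1, h2]
  rw [hfun, Finset.prod_mul_distrib, Finset.prod_ite_eq' Finset.univ i,
    Finset.prod_ite_eq' Finset.univ j]
  simp [mul_inv_cancel₀ (pow_ne_zero l (zeta_ne_zero r))]

lemma zij_mem_GSet (r p n l : ℕ) (hr : 0 < r) (i j : Fin n) (hij : i ≠ j) :
    zijMat n r l i j ∈ GSet r p n := by
  refine ⟨Equiv.swap i j, zijWt r l i j, zijWt_pow hr i j, ?_, rfl⟩
  rw [zijWt_prod hij, one_pow]

/-- A monomial matrix with nonzero weights, as an element of `GL_n(ℂ)`. -/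
def monoUnit (n : ℕ) (π : Equiv.Perm (Fin n)) (a : Fin n → ℂ) (ha : ∀ i, a i ≠ 0) :
    GLn n where
  val := monoMat n π a
  inv := monoMat n π⁻¹ (fun j => (a (π⁻¹ j))⁻¹)
  val_inv := monoMat_mul_inv n π a ha
  inv_val := by
    simp only [monoMat_mul]
    rw [inv_mul_cancel,
      show (fun j => (a (π⁻¹ (π j)))⁻¹ * a j) = fun _ : Fin n => (1 : ℂ) from
        funext fun j => by rw [Equiv.Perm.inv_def, Equiv.symm_apply_apply, inv_mul_cancel₀ (ha _)],
      monoMat_one]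

/-- The element `ζ_i^l ζ_j^{-l} s_{ij}` of `G(r,p,n)`. -/
def zijG (r p n l : ℕ) (hr : 0 < r) (i j : Fin n) (hij : i ≠ j) : ↥(GGroup r p n hr) :=
  ⟨monoUnit n (Equiv.swap i j) (zijWt r l i j) (zijWt_ne_zero r l i j),
   zij_mem_GSet r p n l hr i j hij⟩

/-- The element `κ_{r,n} = (1/r)·Σ_{l<r} Σ_{i<j} ζ_i^l ζ_j^{-l} s_{ij}` of the group
algebra `ℂ[G(r,p,n)]`. -/
def kappaGA (r p n : ℕ) (hr : 0 < r) : MonoidAlgebra ℂ ↥(GGroup r p n hr) :=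
  (1 / (r : ℂ)) • ∑ l ∈ Finset.range r, ∑ i : Fin n, ∑ j : Fin n,
    if h : i < j then MonoidAlgebra.single (zijG r p n l hr i j h.ne) 1 else 0

lemma zijL_last (r l : ℕ) {n : ℕ} (hn : 0 < n) (i j : Fin n)
    (hi : i ≠ lastIdx n hn) (hj : j ≠ lastIdx n hn) :
    zijMat n r l i j (lastIdx n hn) (lastIdx n hn) ≠ 0 := by
  have hswap : Equiv.swap i j (lastIdx n hn) = lastIdx n hn :=
    Equiv.swap_apply_of_ne_of_ne (Ne.symm hi) (Ne.symm hj)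
  rw [zijMat, monoMat_last_entry hn _ _ hswap]
  exact zijWt_ne_zero r l i j _

/-- The element `ζ_i^l ζ_j^{-l} s_{ij}` of `L(r,p,n)`, for `i, j ≤ n-1`. -/
def zijL (r p n l : ℕ) (hr : 0 < r) (hn : 0 < n) (i j : Fin n) (hij : i ≠ j)
    (hi : i ≠ lastIdx n hn) (hj : j ≠ lastIdx n hn) : ↥(LGroup r p n hr hn) :=
  ⟨monoUnit n (Equiv.swap i j) (zijWt r l i j) (zijWt_ne_zero r l i j),
   ⟨zij_mem_GSet r p n l hr i j hij, zijL_last r l hn i j hi hj⟩⟩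

/-- The element `κ_{r,n-1} = (1/r)·Σ_{l<r} Σ_{1≤i<j≤n-1} ζ_i^l ζ_j^{-l} s_{ij}` of the
group algebra `ℂ[L(r,p,n)]`. -/
def kappaLA (r p n : ℕ) (hr : 0 < r) (hn : 0 < n) :
    MonoidAlgebra ℂ ↥(LGroup r p n hr hn) :=
  (1 / (r : ℂ)) • ∑ l ∈ Finset.range r, ∑ i : Fin n, ∑ j : Fin n,
    if h : i < j ∧ (j : ℕ) < n - 1 then
      MonoidAlgebra.single
        (zijL r p n l hr hn i j h.1.ne
          (by
            refine Fin.ne_of_val_ne ?_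
            have h1 : (i : ℕ) < (j : ℕ) := h.1
            have h2 : (j : ℕ) < n - 1 := h.2
            show (i : ℕ) ≠ n - 1
            omega)
          (by
            refine Fin.ne_of_val_ne ?_
            have h2 : (j : ℕ) < n - 1 := h.2
            show (j : ℕ) ≠ n - 1
            omega)) 1
    else 0

/-! ## The induced representation of statement on `Ind_L^G σ` -/

/-- The right regular representation of a group `G` on the space of functions
`G → ℂ`, given by `(x · f)(g) = f(g x)`. -/
def regRep (G : Type*) [Group G] : Representation ℂ G (G → ℂ) where
  toFun x :=
    { toFun := fun f => fun g => f (g * x)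
      map_add' := fun f g => rfl
      map_smul' := fun c f => rfl }
  map_one' := by
    refine LinearMap.ext fun f => ?_
    funext g
    simp
  map_mul' x y := by
    refine LinearMap.ext fun f => ?_
    funext g
    simp [Module.End.mul_apply, mul_assoc]

/-- The space of functions `f : G(r,p,n) → ℂ` with `f(hg) = σ(h)·f(g)` for all
`h ∈ L(r,p,n)`, where `σ(h)` is the `(n,n)` entry of `h`. -/
def IndSig (r p n : ℕ) (hr : 0 < r) (hn : 0 < n) :
    Submodule ℂ (↥(GGroup r p n hr) → ℂ) where
  carrier := {f | ∀ h g : ↥(GGroup r p n hr),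
    ((h : GLn n) : Matrix (Fin n) (Fin n) ℂ) ∈ LSet r p n hn →
    f (h * g) = ((h : GLn n) : Matrix (Fin n) (Fin n) ℂ) (lastIdx n hn) (lastIdx n hn) * f g}
  add_mem' := by
    intro a b ha hb h g hh
    simp [ha h g hh, hb h g hh, mul_add]
  zero_mem' := by intro h g hh; simp
  smul_mem' := by
    intro c a ha h g hh
    simp [ha h g hh]
    ring

lemma IndSig_invariant (r p n : ℕ) (hr : 0 < r) (hn : 0 < n) :
    RepInvariant (regRep ↥(GGroup r p n hr)) (IndSig r p n hr hn) := by
  intro x f hf h g hh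
  show f ((h * g) * x) = _ * f (g * x)
  rw [mul_assoc]
  exact hf h (g * x) hh

/-- The natural representation of `G(r,p,n)` on `ℂ^n` by matrix-vector
multiplication. -/
def natRep (r p n : ℕ) (hr : 0 < r) : Representation ℂ ↥(GGroup r p n hr) (Fin n → ℂ) where
  toFun g := Matrix.mulVecLin ((g : GLn n) : Matrix (Fin n) (Fin n) ℂ)
  map_one' := by
    simp only [OneMemClass.coe_one, Units.val_one, Matrix.mulVecLin_one]
    rfl
  map_mul' g h := by
    simp only [Subgroup.coe_mul, Units.val_mul, Matrix.mulVecLin_mul]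
    rw [Module.End.mul_eq_comp]

/-! ## The operators `Z_{t,r}` and `Z_{t+1/2,r}` -/

/-- `S ∪ S′` as a finite subset of `Fin t ⊕ Fin t`. -/
def SSfin {t : ℕ} (S : Finset (Fin t)) : Finset (Fin t ⊕ Fin t) :=
  Finset.univ.filter fun x => Sum.elim (· ∈ S) (· ∈ S) x

/-- The set partition `b_S` with blocks `S ∪ S′` and `{l,l′}` for `l ∉ S`. -/
def bS {t : ℕ} (S : Finset (Fin t)) : SP t :=
  Setoid.ker fun x : Fin t ⊕ Fin t =>
    if x ∈ SSfin S then (none : Option (Fin t ⊕ Fin t)) else some x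

/-- The set partition `d_I` with blocks `I`, `(S ∪ S′) \ I` and `{l,l′}` for `l ∉ S`. -/
def dI {t : ℕ} (S : Finset (Fin t)) (I : Finset (Fin t ⊕ Fin t)) : SP t :=
  Setoid.ker fun x : Fin t ⊕ Fin t =>
    if x ∈ I then (Sum.inl true : Bool ⊕ (Fin t ⊕ Fin t))
    else if x ∈ SSfin S then Sum.inl false else Sum.inr x

/-- `N(I)` : the number of top-row (unprimed) elements of `I`. -/
def NIc {t : ℕ} (I : Finset (Fin t ⊕ Fin t)) : ℕ :=
  (I.filter fun x => x.isLeft = true).card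

/-- `M(I)` : the number of bottom-row (primed) elements of `I`. -/
def MIc {t : ℕ} (I : Finset (Fin t ⊕ Fin t)) : ℕ :=
  (I.filter fun x => x.isRight = true).card

/-- The operator `Z_{t,r}` on `V^{⊗t}`.  The inner sum over unordered partitions
`{I, (S∪S′)∖I}` (each counted once) is written as `1/2` times the sum over ordered
proper nonempty subsets `I` of `S ∪ S′`; these agree since `d_I = d_{(S∪S′)∖I}` and
the signs coincide. -/
def Zop (r n t : ℕ) : TP n t →ₗ[ℂ] TP n t :=
  (n.choose 2 : ℂ) • LinearMap.id +
  ∑ S ∈ (Finset.univ : Finset (Fin t)).powerset.filter (fun S => S ≠ ∅),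
    ((-1 : ℂ) ^ S.card) •
      (((n : ℂ) - 1) • phiD n t (bS S) +
        (1 / 2 : ℂ) •
          ∑ I ∈ (SSfin S).powerset.filter (fun I =>
              I ≠ ∅ ∧ I ≠ SSfin S ∧ ((NIc I : ℤ) ≡ (MIc I : ℤ) [ZMOD (r : ℤ)])),
            ((-1 : ℂ) ^ ((NIc I : ℤ) - (MIc I : ℤ))) • (phiD n t (dI S I) - phiD n t (bS S)))

/-- The operator `Z_{k+1/2,r}` on `V^{⊗(k+1)}`; as in `Zop`, but for `S` containing
`k+1` the inner sum is restricted to partitions in which `k+1` and `(k+1)′` lie in the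
same part. -/
def ZopHalf (r n k : ℕ) : TP n (k + 1) →ₗ[ℂ] TP n (k + 1) :=
  (n.choose 2 : ℂ) • LinearMap.id +
  ∑ S ∈ (Finset.univ : Finset (Fin (k + 1))).powerset.filter (fun S => S ≠ ∅),
    ((-1 : ℂ) ^ S.card) •
      (((n : ℂ) - 1) • phiD n (k + 1) (bS S) +
        (1 / 2 : ℂ) •
          ∑ I ∈ (SSfin S).powerset.filter (fun I =>
              I ≠ ∅ ∧ I ≠ SSfin S ∧ ((NIc I : ℤ) ≡ (MIc I : ℤ) [ZMOD (r : ℤ)]) ∧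
              (Fin.last k ∈ S →
                ((Sum.inl (Fin.last k) : Fin (k+1) ⊕ Fin (k+1)) ∈ I ↔
                  (Sum.inr (Fin.last k) : Fin (k+1) ⊕ Fin (k+1)) ∈ I))),
            ((-1 : ℂ) ^ ((NIc I : ℤ) - (MIc I : ℤ))) •
              (phiD n (k + 1) (dI S I) - phiD n (k + 1) (bS S)))

/-- The diagonal action of `κ_{r,n}` on `V^{⊗k}`. -/
def kappaOpFull (r n k : ℕ) : TP n k →ₗ[ℂ] TP n k :=
  (1 / (r : ℂ)) • ∑ l ∈ Finset.range r, ∑ i : Fin n, ∑ j : Fin n,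
    if i < j then tensorPow n k (zijMat n r l i j) else 0

/-- The diagonal action of `κ_{r,n-1}` on `V^{⊗(k+1)}`. -/
def kappaOpL (r n k : ℕ) : TP n (k + 1) →ₗ[ℂ] TP n (k + 1) :=
  (1 / (r : ℂ)) • ∑ l ∈ Finset.range r, ∑ i : Fin n, ∑ j : Fin n,
    if i < j ∧ (j : ℕ) < n - 1 then tensorPow n (k + 1) (zijMat n r l i j) else 0

/-- `w ⊗ v_n ∈ V^{⊗(k+1)}` for `w ∈ V^{⊗k}`. -/
def extendLast (n k : ℕ) (hn : 0 < n) (w : TP n k) : TP n (k + 1) :=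
  fun j => if j (Fin.last k) = lastIdx n hn then w (fun t => j t.castSucc) else 0

/-- `A ⊗ Id_{V^{⊗(l-j)}}` : the extension of an operator on `V^{⊗j}` to `V^{⊗l}`,
acting on the first `j` tensor factors. -/
def extendOp (n j l : ℕ) (hjl : j ≤ l) (A : TP n j →ₗ[ℂ] TP n j) :
    TP n l →ₗ[ℂ] TP n l where
  toFun f := fun u =>
    A (fun x : Fin j → Fin n =>
        f (fun t : Fin l => if h : (t : ℕ) < j then x ⟨t, h⟩ else u t))
      (fun s : Fin j => u (Fin.castLE hjl s))
  map_add' f g := by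
    funext u
    show A (fun x : Fin j → Fin n =>
        (f + g) (fun t : Fin l => if h : (t : ℕ) < j then x ⟨t, h⟩ else u t))
      (fun s : Fin j => u (Fin.castLE hjl s)) =
      A (fun x : Fin j → Fin n =>
        f (fun t : Fin l => if h : (t : ℕ) < j then x ⟨t, h⟩ else u t))
      (fun s : Fin j => u (Fin.castLE hjl s)) +
      A (fun x : Fin j → Fin n =>
        g (fun t : Fin l => if h : (t : ℕ) < j then x ⟨t, h⟩ else u t))
      (fun s : Fin j => u (Fin.castLE hjl s))
    have h : (fun x : Fin j → Fin n =>
        (f + g) (fun t : Fin l => if h : (t : ℕ) < j then x ⟨t, h⟩ else u t)) =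
      (fun x : Fin j → Fin n =>
        f (fun t : Fin l => if h : (t : ℕ) < j then x ⟨t, h⟩ else u t)) +
      (fun x : Fin j → Fin n =>
        g (fun t : Fin l => if h : (t : ℕ) < j then x ⟨t, h⟩ else u t)) := rfl
    rw [h, map_add]
    rfl
  map_smul' c f := by
    funext u
    show A (fun x : Fin j → Fin n =>
        (c • f) (fun t : Fin l => if h : (t : ℕ) < j then x ⟨t, h⟩ else u t))
      (fun s : Fin j => u (Fin.castLE hjl s)) =
      c • (A (fun x : Fin j → Fin n =>
        f (fun t : Fin l => if h : (t : ℕ) < j then x ⟨t, h⟩ else u t))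
      (fun s : Fin j => u (Fin.castLE hjl s)))
    have h : (fun x : Fin j → Fin n =>
        (c • f) (fun t : Fin l => if h : (t : ℕ) < j then x ⟨t, h⟩ else u t)) =
      c • (fun x : Fin j → Fin n =>
        f (fun t : Fin l => if h : (t : ℕ) < j then x ⟨t, h⟩ else u t)) := rfl
    rw [h, _root_.map_smul]
    rfl

/-! ## Diagram multiplication (statement of the structure constants) -/

/-- The bottom row of `d₁` matches the top row of `d₂`. -/
def rowMatch (k : ℕ) (d1 d2 : SP k) : Prop :=
  ∀ i j : Fin k, d1.r (Sum.inr i) (Sum.inr j) ↔ d2.r (Sum.inl i) (Sum.inl j)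

/-- Extend a setoid on `α` along an injection `e : α → β` by singleton classes on
the complement of the range. -/
def extendSetoid {α β : Type*} (e : α → β) (he : Function.Injective e)
    (d : Setoid α) : Setoid β where
  r x y := x = y ∨ ∃ a b, d.r a b ∧ x = e a ∧ y = e b
  iseqv := by
    constructor
    · intro x; exact Or.inl rfl
    · rintro x y (rfl | ⟨a, b, hab, rfl, rfl⟩)
      · exact Or.inl rfl
      · exact Or.inr ⟨b, a, d.iseqv.symm hab, rfl, rfl⟩
    · rintro x y z (rfl | ⟨a, b, hab, rfl, rfl⟩) h2
      · exact h2
      · rcases h2 with rfl | ⟨a', b', hab', hy, rfl⟩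
        · exact Or.inr ⟨a, b, hab, rfl, rfl⟩
        · have hba : b = a' := he hy
          exact Or.inr ⟨a, b', d.iseqv.trans hab (hba ▸ hab'), rfl, rfl⟩

/-- The three-row vertex set: top row, middle row, bottom row. -/
abbrev T3 (k : ℕ) : Type := Fin k ⊕ (Fin k ⊕ Fin k)

/-- `d₁` placed on the top and middle rows. -/
def embT (k : ℕ) : Fin k ⊕ Fin k → T3 k := Sum.map id Sum.inl

/-- `d₂` placed on the middle and bottom rows. -/
def embB (k : ℕ) : Fin k ⊕ Fin k → T3 k := Sum.inr

/-- The outer (top and bottom) rows. -/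
def embO (k : ℕ) : Fin k ⊕ Fin k → T3 k := Sum.map id Sum.inr

lemma embT_inj (k : ℕ) : Function.Injective (embT k) :=
  Function.Injective.sumMap Function.injective_id Sum.inl_injective

/-- The stacked three-row diagram : the join of `d₁` (on top∪middle) and `d₂`
(on middle∪bottom); its classes are the connected components. -/
def stacked (k : ℕ) (d1 d2 : SP k) : Setoid (T3 k) :=
  extendSetoid (embT k) (embT_inj k) d1 ⊔ extendSetoid (embB k) Sum.inr_injective d2

/-- The concatenation `d₁ ∘ d₂`, i.e. the restriction of the stacked diagram to the
outer rows. -/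
def compSetoid (k : ℕ) (d1 d2 : SP k) : SP k :=
  Setoid.comap (embO k) (stacked k d1 d2)

/-- `[d₁ ∘ d₂]` : the number of connected components of the stacked diagram contained
entirely in the middle row. -/
def midCount (k : ℕ) (d1 d2 : SP k) : ℕ :=
  Nat.card {q : Quotient (stacked k d1 d2) //
    ∀ x : T3 k, Quotient.mk (stacked k d1 d2) x = q → ∃ i : Fin k, x = Sum.inr (Sum.inl i)}

/-- A block entirely contained in the top row. -/
def topOnly {k : ℕ} (d : SP k) (q : Quotient d) : Prop :=
  ∀ x, Quotient.mk d x = q → ∃ i : Fin k, x = Sum.inl i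

/-- A block entirely contained in the bottom row. -/
def botOnly {k : ℕ} (d : SP k) (q : Quotient d) : Prop :=
  ∀ x, Quotient.mk d x = q → ∃ i : Fin k, x = Sum.inr i

/-- `x` lies in the block merged from the pair `pr = (q₁, q₂)`. -/
def memPair {k : ℕ} (d1 d2 : SP k) : Fin k ⊕ Fin k → Quotient d1 × Quotient d2 → Prop
  | Sum.inl i, pr => Quotient.mk d1 (Sum.inl i) = pr.1
  | Sum.inr i, pr => Quotient.mk d2 (Sum.inr i) = pr.2

/-- `d` is obtained from `d₁ ∘ d₂` by choosing an injective partial matching between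
the top-only blocks of `d₁` and the bottom-only blocks of `d₂` and merging each
matched pair into a single block. -/
def IsCoarsening (k : ℕ) (d1 d2 d : SP k) : Prop :=
  ∃ P : Finset (Quotient d1 × Quotient d2),
    (∀ pr ∈ P, topOnly d1 pr.1 ∧ botOnly d2 pr.2) ∧
    (∀ pr ∈ P, ∀ pr' ∈ P, pr.1 = pr'.1 → pr = pr') ∧
    (∀ pr ∈ P, ∀ pr' ∈ P, pr.2 = pr'.2 → pr = pr') ∧
    (∀ x y : Fin k ⊕ Fin k, d.r x y ↔
      ((compSetoid k d1 d2).r x y ∨ ∃ pr ∈ P, memPair d1 d2 x pr ∧ memPair d1 d2 y pr))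

/-- The (integer) falling factorial `(a)_b = a(a-1)⋯(a-b+1)`. -/
def fallingC (a : ℤ) (b : ℕ) : ℤ := ∏ i ∈ Finset.range b, (a - i)

/-! ## The elements `c₁, c₂` of `G(2,2,2k)` and the operator `M_{k,2,2}` -/

/-- The underlying function of the permutation `(1 2)(3 4)⋯(2k-1 2k)` of `Fin (2k)`:
it swaps `2t` and `2t+1` (0-indexed) for each `t < k`. -/
def pairFn (k : ℕ) : Fin (2 * k) → Fin (2 * k) := fun x =>
  if _ : (x : ℕ) % 2 = 0 then ⟨(x : ℕ) + 1, by have := x.2; omega⟩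
  else ⟨(x : ℕ) - 1, by have := x.2; omega⟩

lemma pairFn_invol (k : ℕ) : Function.Involutive (pairFn k) := by
  intro x
  unfold pairFn
  split_ifs with h1 h2 h3
  · refine Fin.ext ?_; simp only [Fin.val_mk] at h2 ⊢; omega
  · refine Fin.ext ?_; simp only [Fin.val_mk] at h2 ⊢; omega
  · refine Fin.ext ?_; simp only [Fin.val_mk] at h3 ⊢; omega
  · refine Fin.ext ?_; simp only [Fin.val_mk] at h3 ⊢; omega

/-- The permutation `(1 2)(3 4)⋯(2k-1 2k)` of `Fin (2k)`. -/
def pairPerm (k : ℕ) : Equiv.Perm (Fin (2 * k)) :=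
  Function.Involutive.toPerm (pairFn k) (pairFn_invol k)

/-- `c₂` : the permutation matrix of `(1 2)(3 4)⋯(2k-1 2k)`. -/
def c2Mat (k : ℕ) : Matrix (Fin (2 * k)) (Fin (2 * k)) ℂ :=
  monoMat (2 * k) (pairPerm k) (fun _ => 1)

/-- The diagonal matrix `diag(-1,-1,1,…,1)`. -/
def dMat (k : ℕ) : Matrix (Fin (2 * k)) (Fin (2 * k)) ℂ :=
  Matrix.diagonal fun t => if (t : ℕ) < 2 then (-1 : ℂ) else 1

/-- `c₁ = D · c₂`. -/
def c1Mat (k : ℕ) : Matrix (Fin (2 * k)) (Fin (2 * k)) ℂ := dMat k * c2Mat k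

/-- Two matrices are conjugate by an element of `G(r,p,n)`. -/
def conjIn (r p n : ℕ) (c x : Matrix (Fin n) (Fin n) ℂ) : Prop :=
  ∃ g ∈ GSet r p n, g * c = x * g

/-- The conjugacy class of `c` in `G(r,p,n)`. -/
def conjClass (r p n : ℕ) (c : Matrix (Fin n) (Fin n) ℂ) :
    Set (Matrix (Fin n) (Fin n) ℂ) :=
  {h | h ∈ GSet r p n ∧ conjIn r p n c h}

/-- The set partition of `{1,…,k,1′,…,k′}` all of whose blocks are singletons. -/
def singletonSP (k : ℕ) : SP k := ⟨Eq, eq_equivalence⟩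

/-- The operator `M_{k,2,2} = φ_k(x_{d₀})` on `(ℂ^{2k})^{⊗k}`, where `d₀` is the set
partition with all blocks singletons. -/
def Mop (k : ℕ) : TP (2 * k) k →ₗ[ℂ] TP (2 * k) k :=
  phiX (2 * k) k (singletonSP k)

/-! An endomorphism of `V^{⊗k}` with matrix `K` commutes with `g^{⊗k}` for the monomial matrix
`g = (π, a)` iff `K (π ∘ o) (π ∘ i) · ∏ a (i t) = ∏ a (o t) · K o i` for all index tuples. Taking
`a = 1`, `K` is invariant under simultaneous permutation of the indices, so it is constant on the
pairs `(i, o)` whose equality pattern is a given partition `d` with at most `n` blocks: it is a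
combination of the `φ_k(x_d)`, which have disjoint supports and hence are independent. Taking
`π = 1`, `K o i ≠ 0` forces `∏ a (i t) = ∏ a (o t)` for every diagonal element `a` of `G(r,p,n)`.
These are the `a = ζ ^ f` with `r ∣ m ∑ f`, so the condition reads
`r ∣ ∑ f v (N v - M v)` whenever `r ∣ m ∑ f`, where `N v`, `M v` count the occurrences of `v` in
`i` and `o`. Testing `f = e_v - e_w` and `f = (r/m) e_v` shows that this holds iff either all
`N v - M v` are divisible by `r`, or all are divisible by `m` and congruent to each other mod `r`;
read on the blocks of `d`, this says exactly `d ∈ Π_k(r) ∪ Λ_k(r,p,n)`. -/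

section Balance

variable {ι : Type*} [Fintype ι]

def IsBalanced (r m : ℕ) (e : ι → ℤ) : Prop :=
  (∀ v, (r : ℤ) ∣ e v) ∨ ((∀ v, (m : ℤ) ∣ e v) ∧ ∀ v w, (r : ℤ) ∣ e v - e w)

lemma IsBalanced.dvd_sum_mul {r m : ℕ} {e : ι → ℤ} (he : IsBalanced r m e) {f : ι → ℤ}
    (hf : (r : ℤ) ∣ m * ∑ v, f v) : (r : ℤ) ∣ ∑ v, f v * e v := by
  rcases he with he | ⟨hm, hdiff⟩
  · exact Finset.dvd_sum fun v _ => (he v).mul_left _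
  rcases isEmpty_or_nonempty ι with _ | ⟨⟨v₀⟩⟩
  · simp
  obtain ⟨t, ht⟩ := hm v₀
  have hsplit : ∑ v, f v * e v = (m * ∑ v, f v) * t + ∑ v, f v * (e v - e v₀) := by
    rw [mul_comm (m : ℤ), mul_assoc, ← ht, Finset.sum_mul, ← Finset.sum_add_distrib]
    exact Finset.sum_congr rfl fun v _ => by ring
  rw [hsplit]
  exact dvd_add (hf.mul_right t) (Finset.dvd_sum fun v _ => (hdiff v v₀).mul_left _)

lemma isBalanced_of_forall_dvd {r m : ℕ} (hr : 0 < r) (hm : m ∣ r) {e : ι → ℤ}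
    (h : ∀ f : ι → ℤ, (r : ℤ) ∣ m * ∑ v, f v → (r : ℤ) ∣ ∑ v, f v * e v) :
    IsBalanced r m e := by
  by_cases hdiff : ∀ v w, (r : ℤ) ∣ e v - e w
  · refine Or.inr ⟨fun v => ?_, hdiff⟩
    obtain ⟨q, rfl⟩ := hm
    have hq : (q : ℤ) ≠ 0 := by
      have : q ≠ 0 := by rintro rfl; simp at hr
      exact_mod_cast this
    have := h (Pi.single v q) (by simp)
    simp only [Pi.single_apply, ite_mul, zero_mul, Finset.sum_ite_eq', Finset.mem_univ,
      if_true, Nat.cast_mul] at this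
    rwa [mul_comm (m : ℤ), mul_dvd_mul_iff_left hq] at this
  · push Not at hdiff
    obtain ⟨v, w, hvw⟩ := hdiff
    have := h (Pi.single v 1 - Pi.single w 1) (by simp)
    simp only [Pi.sub_apply, sub_mul, Finset.sum_sub_distrib, Pi.single_apply, ite_mul,
      one_mul, zero_mul, Finset.sum_ite_eq', Finset.mem_univ, if_true] at this
    exact absurd this hvw

lemma isBalanced_iff_forall_dvd {r m : ℕ} (hr : 0 < r) (hm : m ∣ r) (e : ι → ℤ) :
    IsBalanced r m e ↔ ∀ f : ι → ℤ, (r : ℤ) ∣ m * ∑ v, f v → (r : ℤ) ∣ ∑ v, f v * e v :=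
  ⟨fun he _ => he.dvd_sum_mul, isBalanced_of_forall_dvd hr hm⟩

end Balance

section RootsOfUnity

variable {M : Type*} [CommGroupWithZero M]

lemma prod_zpow_eq_zpow_sum {α : Type*} {ζ : M} (hζ : ζ ≠ 0) (s : Finset α) (g : α → ℤ) :
    ∏ t ∈ s, ζ ^ g t = ζ ^ ∑ t ∈ s, g t := by
  induction s using Finset.cons_induction with
  | empty => simp
  | cons a s _ ih => rw [Finset.prod_cons, Finset.sum_cons, zpow_add₀ hζ, ih]

lemma _root_.IsPrimitiveRoot.zpow_eq_zpow_iff_dvd_sub {ζ : M} {r : ℕ}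
    (hζ : IsPrimitiveRoot ζ r) (hr : 0 < r) (x y : ℤ) : ζ ^ x = ζ ^ y ↔ (r : ℤ) ∣ x - y := by
  have hζ0 : ζ ≠ 0 := hζ.ne_zero hr.ne'
  rw [← hζ.zpow_eq_one_iff_dvd, zpow_sub₀ hζ0, div_eq_one_iff_eq (zpow_ne_zero _ hζ0)]

variable {α β ι : Type*} [Fintype α] [Fintype β] [Fintype ι]

lemma forall_prod_comp_eq_iff {r : ℕ} (hr : 0 < r) (m : ℕ) (i : α → ι) (o : β → ι) :
    (∀ a : ι → ℂ, (∀ v, a v ^ r = 1) → (∏ v, a v) ^ m = 1 → ∏ t, a (i t) = ∏ t, a (o t)) ↔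
      ∀ f : ι → ℤ, (r : ℤ) ∣ m * ∑ v, f v → (r : ℤ) ∣ ∑ t, f (i t) - ∑ t, f (o t) := by
  have hζ : IsPrimitiveRoot (zeta r) r := Complex.isPrimitiveRoot_exp r hr.ne'
  have hζ0 : zeta r ≠ 0 := zeta_ne_zero r
  have hroots : ∀ a : ι → ℂ, (∀ v, a v ^ r = 1) ↔ ∃ f : ι → ℤ, a = fun v => zeta r ^ f v := by
    refine fun a => ⟨fun ha => ?_, ?_⟩
    · have : NeZero r := ⟨hr.ne'⟩
      choose f _ hf using fun v => hζ.eq_pow_of_pow_eq_one (ha v)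
      exact ⟨fun v => f v, funext fun v => by simp [hf]⟩
    · rintro ⟨f, rfl⟩ v
      rw [← zpow_natCast, ← _root_.zpow_mul, mul_comm, _root_.zpow_mul, zpow_natCast,
        zeta_pow_self hr, _root_.one_zpow]
  have hchar : ∀ f : ι → ℤ,
      ((∏ v, zeta r ^ f v) ^ m = 1 ↔ (r : ℤ) ∣ m * ∑ v, f v) ∧
      (∏ t, zeta r ^ f (i t) = ∏ t, zeta r ^ f (o t) ↔
        (r : ℤ) ∣ ∑ t, f (i t) - ∑ t, f (o t)) := fun f => by
    simp only [prod_zpow_eq_zpow_sum hζ0, ← zpow_natCast, ← _root_.zpow_mul,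
      mul_comm _ (m : ℤ), hζ.zpow_eq_one_iff_dvd, hζ.zpow_eq_zpow_iff_dvd_sub hr]
    exact ⟨trivial, trivial⟩
  constructor
  · intro h f hf
    exact (hchar f).2.1 (h _ ((hroots _).2 ⟨f, rfl⟩) ((hchar f).1.2 hf))
  · intro h a ha hm
    obtain ⟨f, rfl⟩ := (hroots a).1 ha
    exact (hchar f).2.2 (h f ((hchar f).1.1 hm))

end RootsOfUnity

section KernelMatrices

variable {n k : ℕ}

lemma kernelMap_eq_toLin' (K : (Fin k → Fin n) → (Fin k → Fin n) → ℂ) :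
    kernelMap n k K = Matrix.toLin' (Matrix.of K) :=
  rfl

lemma kernelMap_surjective : Function.Surjective (kernelMap n k) := fun F =>
  ⟨LinearMap.toMatrix' F, Matrix.toLin'_toMatrix' F⟩

lemma kernelMap_apply_single (K : (Fin k → Fin n) → (Fin k → Fin n) → ℂ)
    (i o : Fin k → Fin n) : kernelMap n k K (Pi.single i 1) o = K o i := by
  simp [kernelMap_eq_toLin']

lemma tensorPow_monoMat (π : Equiv.Perm (Fin n)) (a : Fin n → ℂ) :
    tensorPow n k (monoMat n π a) =
      kernelMap n k fun o i => if o = π ∘ i then ∏ t, a (i t) else 0 := by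
  unfold tensorPow
  congr 1
  ext o i
  split_ifs with h
  · simp [monoMat, h]
  · obtain ⟨t, ht⟩ : ∃ t, o t ≠ π (i t) := by
      by_contra! hc
      exact h (funext hc)
    exact Finset.prod_eq_zero (Finset.mem_univ t) (by simp [monoMat, ht])

lemma kernelMap_comp_tensorPow_monoMat_comm_iff (K : (Fin k → Fin n) → (Fin k → Fin n) → ℂ)
    (π : Equiv.Perm (Fin n)) (a : Fin n → ℂ) :
    kernelMap n k K ∘ₗ tensorPow n k (monoMat n π a) =
        tensorPow n k (monoMat n π a) ∘ₗ kernelMap n k K ↔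
      ∀ o i, K (π ∘ o) (π ∘ i) * ∏ t, a (i t) = (∏ t, a (o t)) * K o i := by
  have hπ : ∀ o j : Fin k → Fin n, π ∘ o = π ∘ j ↔ o = j :=
    fun o j => π.injective.comp_left.eq_iff
  rw [tensorPow_monoMat, kernelMap_eq_toLin', kernelMap_eq_toLin', ← Matrix.toLin'_mul,
    ← Matrix.toLin'_mul, Matrix.toLin'.injective.eq_iff, ← Matrix.ext_iff,
    (π.surjective.comp_left : Function.Surjective (π ∘ · : (Fin k → Fin n) → _)).forall]
  simp [Matrix.mul_apply, hπ]

end KernelMatrices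

section Blocks

variable {n k : ℕ}

instance {α : Type*} [Finite α] : Finite (Setoid α) :=
  Finite.of_injective (fun d : Setoid α => (d.r : α → α → Prop)) fun _ _ h =>
    Setoid.ext fun a b => iff_of_eq (congrFun₂ h a b)

lemma exists_perm_comp_eq_of_ker_eq {α : Type*} {c c' : α → Fin n}
    (h : Setoid.ker c = Setoid.ker c') : ∃ π : Equiv.Perm (Fin n), c' = π ∘ c := by
  let e : Quotient (Setoid.ker c) ≃ Quotient (Setoid.ker c') :=
    Quotient.congrRight (Setoid.ext_iff.1 h)
  let g : Set.range (Setoid.kerLift c) ≃ Set.range (Setoid.kerLift c') :=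
    (Equiv.ofInjective _ (Setoid.kerLift_injective c)).symm.trans
      (e.trans (Equiv.ofInjective _ (Setoid.kerLift_injective c')))
  refine ⟨g.extendSubtype, funext fun x => ?_⟩
  have hx : c x ∈ Set.range (Setoid.kerLift c) := ⟨⟦x⟧, rfl⟩
  rw [Function.comp_apply, Equiv.extendSubtype_apply_of_mem g _ hx]
  have : (⟨c x, hx⟩ : Set.range (Setoid.kerLift c)) =
      Equiv.ofInjective _ (Setoid.kerLift_injective c) ⟦x⟧ := rfl
  simp only [g, this, Equiv.trans_apply, Equiv.symm_apply_apply]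
  rfl

lemma exists_ker_eq {α : Type*} {d : Setoid α} [Finite (Quotient d)]
    (hd : Nat.card (Quotient d) ≤ n) : ∃ c : α → Fin n, Setoid.ker c = d := by
  let E : Quotient d ≃ Fin (Nat.card (Quotient d)) := Finite.equivFin _
  refine ⟨fun x => Fin.castLE hd (E ⟦x⟧), Setoid.ext fun a b => ?_⟩
  rw [Setoid.ker_def, (Fin.castLE_injective hd).eq_iff, E.injective.eq_iff, Quotient.eq]

lemma nBlocks_ker_le (c : Fin k ⊕ Fin k → Fin n) : nBlocks (Setoid.ker c) ≤ n := by
  rw [nBlocks, Nat.card_congr (Setoid.quotientKerEquivRange c), Nat.card_coe_set_eq]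
  simpa using Set.ncard_le_card (Set.range c)

lemma nBlocks_ker_eq_iff (c : Fin k ⊕ Fin k → Fin n) :
    nBlocks (Setoid.ker c) = n ↔ Function.Surjective c := by
  rw [nBlocks, Nat.card_congr (Setoid.quotientKerEquivRange c), Nat.card_coe_set_eq,
    ← Set.range_eq_univ, Set.eq_univ_iff_ncard, Nat.card_eq_fintype_card, Fintype.card_fin]

lemma inPiRPN_iff {r p : ℕ} {d : SP k} :
    inPiRPN r p n d ↔ (inPi r d ∨ inLambda r p n d) ∧ nBlocks d ≤ n := by
  unfold inPiRPN inA inTheta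
  constructor
  · rintro ⟨h | h | h, hle⟩
    · exact ⟨Or.inl h, hle⟩
    · exact ⟨Or.inr h, hle⟩
    · exact absurd h.1 hle.not_gt
  · rintro ⟨h | h, hle⟩
    · exact ⟨Or.inl h, hle⟩
    · exact ⟨Or.inr (Or.inl h), hle⟩

end Blocks

section Excess

open Finset

variable {n k : ℕ}

lemma _root_.Int.modEq_iff_dvd_sub {R a b : ℤ} : a ≡ b [ZMOD R] ↔ R ∣ a - b :=
  Int.modEq_iff_dvd.trans dvd_sub_comm

def excess (i o : Fin k → Fin n) (v : Fin n) : ℤ :=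
  (#{t | i t = v} : ℤ) - #{t | o t = v}

lemma sum_comp_sub_sum_comp (f : Fin n → ℤ) (i o : Fin k → Fin n) :
    ∑ t, f (i t) - ∑ t, f (o t) = ∑ v, f v * excess i o v := by
  have hfib : ∀ g : Fin k → Fin n, ∑ t, f (g t) = ∑ v, f v * #{t | g t = v} := fun g => by
    rw [← sum_fiberwise_of_maps_to (g := g) (t := univ) fun _ _ => mem_univ _]
    refine sum_congr rfl fun v _ => ?_
    rw [sum_congr rfl fun t ht => congrArg f (mem_filter.1 ht).2, sum_const, nsmul_eq_mul,
      mul_comm]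
  rw [hfib, hfib, ← sum_sub_distrib]
  exact sum_congr rfl fun v _ => by rw [excess, mul_sub]

lemma excess_eq_zero_of_notMem_range {i o : Fin k → Fin n} {v : Fin n}
    (hv : v ∉ Set.range (Sum.elim i o)) : excess i o v = 0 := by
  have hi : ∀ t, i t ≠ v := fun t h => hv ⟨Sum.inl t, h⟩
  have ho : ∀ t, o t ≠ v := fun t h => hv ⟨Sum.inr t, h⟩
  simp [excess, hi, ho]

lemma topCt_sub_botCt_ker (i o : Fin k → Fin n) (x : Fin k ⊕ Fin k) :
    (topCt (Setoid.ker (Sum.elim i o)) ⟦x⟧ : ℤ) - botCt (Setoid.ker (Sum.elim i o)) ⟦x⟧ =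
      excess i o (Sum.elim i o x) := by
  simp only [topCt, botCt, excess, Nat.card_eq_fintype_card, ← Fintype.card_subtype,
    Quotient.eq, Setoid.ker_def, Sum.elim_inl, Sum.elim_inr]

lemma inPi_ker_iff (r : ℕ) (i o : Fin k → Fin n) :
    inPi r (Setoid.ker (Sum.elim i o)) ↔ ∀ v, (r : ℤ) ∣ excess i o v := by
  simp only [inPi, Quotient.forall, Int.modEq_iff_dvd_sub, topCt_sub_botCt_ker]
  refine ⟨fun h v => ?_, fun h x => h _⟩
  by_cases hv : v ∈ Set.range (Sum.elim i o)
  · obtain ⟨x, rfl⟩ := hv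
    exact h x
  · rw [excess_eq_zero_of_notMem_range hv]
    exact dvd_zero _

lemma inLambda_ker_iff (r p : ℕ) (i o : Fin k → Fin n) :
    inLambda r p n (Setoid.ker (Sum.elim i o)) ↔ Function.Surjective (Sum.elim i o) ∧
      (∀ v, ((r / p : ℕ) : ℤ) ∣ excess i o v ∧ ¬ (r : ℤ) ∣ excess i o v) ∧
      ∀ v w, (r : ℤ) ∣ excess i o v - excess i o w := by
  rw [inLambda, nBlocks_ker_eq_iff]
  refine and_congr_right fun hsurj => ?_
  simp only [Quotient.forall, Int.modEq_iff_dvd_sub, topCt_sub_botCt_ker, hsurj.forall]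

lemma isBalanced_excess_iff (r p : ℕ) (i o : Fin k → Fin n) :
    IsBalanced r (r / p) (excess i o) ↔
      inPi r (Setoid.ker (Sum.elim i o)) ∨ inLambda r p n (Setoid.ker (Sum.elim i o)) := by
  rw [inPi_ker_iff, inLambda_ker_iff]
  constructor
  · rintro (h | ⟨hm, hdiff⟩)
    · exact Or.inl h
    by_cases h : ∀ v, (r : ℤ) ∣ excess i o v
    · exact Or.inl h
    push Not at h
    obtain ⟨v₁, hv₁⟩ := h
    -- the excesses are all congruent mod `r`, so none of them vanishes: every value is taken
    have hndvd : ∀ v, ¬ (r : ℤ) ∣ excess i o v := fun v hv =>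
      hv₁ (by simpa using dvd_add (hdiff v₁ v) hv)
    refine Or.inr ⟨fun v => ?_, fun v => ⟨hm v, hndvd v⟩, hdiff⟩
    by_contra hv
    exact hndvd v (by rw [excess_eq_zero_of_notMem_range hv]; exact dvd_zero _)
  · rintro (h | ⟨-, h, hdiff⟩)
    · exact Or.inl h
    · exact Or.inr ⟨fun v => (h v).1, hdiff⟩

lemma forall_diag_prod_eq_iff {r p : ℕ} (hr : 0 < r) (hpr : p ∣ r) (i o : Fin k → Fin n) :
    (∀ a : Fin n → ℂ, (∀ v, a v ^ r = 1) → (∏ v, a v) ^ (r / p) = 1 →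
        ∏ t, a (i t) = ∏ t, a (o t)) ↔
      inPi r (Setoid.ker (Sum.elim i o)) ∨ inLambda r p n (Setoid.ker (Sum.elim i o)) := by
  rw [forall_prod_comp_eq_iff hr, ← isBalanced_excess_iff,
    isBalanced_iff_forall_dvd hr (Nat.div_dvd_of_dvd hpr)]
  simp only [sum_comp_sub_sum_comp]

end Excess

section PartitionOperators

variable {n k : ℕ}

lemma coeX_eq_ite (d : SP k) (c : Fin k ⊕ Fin k → Fin n) :
    coeX n k d c = if Setoid.ker c = d then 1 else 0 := by
  simp only [coeX, Setoid.ext_iff, Setoid.ker_def, iff_comm]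

lemma coeX_comp_perm (π : Equiv.Perm (Fin n)) (d : SP k) (c : Fin k ⊕ Fin k → Fin n) :
    coeX n k d (π ∘ c) = coeX n k d c := by
  simp only [coeX, Function.comp_apply, π.injective.eq_iff]

lemma phiX_apply_single (d : SP k) (c : Fin k ⊕ Fin k → Fin n) :
    phiX n k d (Pi.single (c ∘ Sum.inl) 1) (c ∘ Sum.inr) = coeX n k d c := by
  rw [phiX, kernelMap_apply_single, Sum.elim_comp_inl_inr]

lemma kernelMap_entry_eq_of_ker_eq {K : (Fin k → Fin n) → (Fin k → Fin n) → ℂ}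
    (hK : ∀ (π : Equiv.Perm (Fin n)) o i, K (π ∘ o) (π ∘ i) = K o i)
    {i o i' o' : Fin k → Fin n} (h : Setoid.ker (Sum.elim i o) = Setoid.ker (Sum.elim i' o')) :
    K o i = K o' i' := by
  obtain ⟨π, hπ⟩ := exists_perm_comp_eq_of_ker_eq h
  have hi : i' = π ∘ i := funext fun t => congrFun hπ (Sum.inl t)
  have ho : o' = π ∘ o := funext fun t => congrFun hπ (Sum.inr t)
  rw [hi, ho, hK]

lemma kernelMap_mem_span_phiX {P : SP k → Prop} (hP : ∀ d, P d → nBlocks d ≤ n)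
    {K : (Fin k → Fin n) → (Fin k → Fin n) → ℂ}
    (hK : ∀ (π : Equiv.Perm (Fin n)) o i, K (π ∘ o) (π ∘ i) = K o i)
    (hsupp : ∀ o i, K o i ≠ 0 → P (Setoid.ker (Sum.elim i o))) :
    kernelMap n k K ∈ Submodule.span ℂ {T | ∃ d : SP k, P d ∧ T = phiX n k d} := by
  choose c hc using fun d : {d : SP k // P d} => exists_ker_eq (hP _ d.2)
  have : Fintype {d : SP k // P d} := Fintype.ofFinite _
  have hentry : ∀ o i, K o i =
      ∑ d, K (c d ∘ Sum.inr) (c d ∘ Sum.inl) * coeX n k d.1 (Sum.elim i o) := by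
    intro o i
    simp only [coeX_eq_ite, mul_ite, mul_one, mul_zero]
    by_cases h : P (Setoid.ker (Sum.elim i o))
    · rw [Fintype.sum_eq_single ⟨_, h⟩ fun d hd => if_neg fun hd' => hd (Subtype.ext hd'.symm),
        if_pos rfl]
      exact kernelMap_entry_eq_of_ker_eq hK (by rw [Sum.elim_comp_inl_inr, hc])
    · rw [Finset.sum_eq_zero fun d _ => if_neg fun hd => h (by rw [hd]; exact d.2)]
      exact not_not.1 (mt (hsupp o i) h)
  have hsum : kernelMap n k K = ∑ d, K (c d ∘ Sum.inr) (c d ∘ Sum.inl) • phiX n k d.1 := by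
    simp only [phiX, kernelMap_eq_toLin', ← map_smul, ← map_sum]
    congr 1
    ext o i
    simp [hentry o i, Matrix.sum_apply]
  rw [hsum]
  exact Submodule.sum_mem _ fun d _ =>
    Submodule.smul_mem _ _ (Submodule.subset_span ⟨d.1, d.2, rfl⟩)

lemma linearIndependent_phiX {P : SP k → Prop} (hP : ∀ d, P d → nBlocks d ≤ n) :
    LinearIndependent ℂ fun d : {d : SP k // P d} => phiX n k d.1 := by
  rw [linearIndependent_iff']
  intro s g hsum d₀ hd₀
  obtain ⟨c, hc⟩ := exists_ker_eq (hP _ d₀.2)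
  have := congrFun (LinearMap.congr_fun hsum (Pi.single (c ∘ Sum.inl) 1)) (c ∘ Sum.inr)
  simpa [phiX_apply_single, coeX_eq_ite, hc, Subtype.val_inj, hd₀] using this

end PartitionOperators

section Centralizer

variable {r p n k : ℕ}

lemma centG_eq_centralizer :
    centG r p n k = Subalgebra.centralizer ℂ (tensorPow n k '' GSet r p n) := by
  ext F
  simp only [centG, Set.mem_ofPred_eq, Subalgebra.coe_centralizer, Set.mem_centralizer_iff,
    Set.forall_mem_image, Module.End.mul_eq_comp, eq_comm]

lemma phiX_mem_centG (hr : 0 < r) (hpr : p ∣ r) {d : SP k}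
    (hd : inPi r d ∨ inLambda r p n d) : phiX n k d ∈ centG r p n k := by
  rintro _ ⟨π, a, har, hm, rfl⟩
  rw [phiX, kernelMap_comp_tensorPow_monoMat_comm_iff]
  intro o i
  rw [← Sum.comp_elim, coeX_comp_perm, coeX_eq_ite]
  split_ifs with h
  · rw [one_mul, mul_one, (forall_diag_prod_eq_iff hr hpr i o).2 (h ▸ hd) a har hm]
  · rw [zero_mul, mul_zero]

lemma span_phiX_subset_centG (hr : 0 < r) (hpr : p ∣ r) :
    (Submodule.span ℂ {T | ∃ d : SP k, inPiRPN r p n d ∧ T = phiX n k d} :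
      Set (TP n k →ₗ[ℂ] TP n k)) ⊆ centG r p n k := by
  rw [centG_eq_centralizer, ← Subalgebra.coe_toSubmodule, SetLike.coe_subset_coe,
    Submodule.span_le]
  rintro _ ⟨d, hd, rfl⟩
  rw [Subalgebra.coe_toSubmodule, ← centG_eq_centralizer]
  exact phiX_mem_centG hr hpr (inPiRPN_iff.1 hd).1

lemma mem_span_phiX_of_mem_centG (hr : 0 < r) (hpr : p ∣ r) {F : TP n k →ₗ[ℂ] TP n k}
    (hF : F ∈ centG r p n k) :
    F ∈ Submodule.span ℂ {T | ∃ d : SP k, inPiRPN r p n d ∧ T = phiX n k d} := by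
  obtain ⟨K, rfl⟩ := kernelMap_surjective F
  have hcomm := fun π a hg => (kernelMap_comp_tensorPow_monoMat_comm_iff K π a).1 (hF _ hg)
  refine kernelMap_mem_span_phiX (fun _ hd => hd.2) (fun π o i => ?_) fun o i hK => ?_
  · simpa using hcomm π (fun _ => 1) ⟨π, _, fun _ => one_pow r, by simp, rfl⟩ o i
  · refine inPiRPN_iff.2 ⟨(forall_diag_prod_eq_iff hr hpr i o).1 fun a har hm => ?_,
      nBlocks_ker_le _⟩
    exact mul_left_cancel₀ hK (by simpa [mul_comm] using hcomm 1 a ⟨1, a, har, hm, rfl⟩ o i)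

end Centralizer

theorem statement2_general (r p n k : ℕ) (hr : 0 < r) (hpr : p ∣ r) :
    ((Submodule.span ℂ {T : TP n k →ₗ[ℂ] TP n k |
        ∃ d : SP k, inPiRPN r p n d ∧ T = phiX n k d} :
        Submodule ℂ (TP n k →ₗ[ℂ] TP n k)) : Set (TP n k →ₗ[ℂ] TP n k))
      = centG r p n k ∧
    LinearIndependent ℂ fun d : {d : SP k // inPiRPN r p n d} => phiX n k d.1 :=
  ⟨(span_phiX_subset_centG hr hpr).antisymm fun _ hF => mem_span_phiX_of_mem_centG hr hpr hF,
    linearIndependent_phiX fun _ hd => hd.2⟩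

/-- `{φ_k(x_d) : d ∈ Π_k(r,p,n)}` is a `ℂ`-basis of the
centralizer algebra `End_{G(r,p,n)}(V^{⊗k})`: it spans it and is linearly
independent. -/
theorem statement2 (r p n k : ℕ) (hr : 0 < r) (hp : 0 < p) (hn : 0 < n) (hk : 0 < k)
    (hpr : p ∣ r) :
    ((Submodule.span ℂ {T : TP n k →ₗ[ℂ] TP n k |
        ∃ d : SP k, inPiRPN r p n d ∧ T = phiX n k d} :
        Submodule ℂ (TP n k →ₗ[ℂ] TP n k)) : Set (TP n k →ₗ[ℂ] TP n k))
      = centG r p n k ∧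
    LinearIndependent ℂ fun d : {d : SP k // inPiRPN r p n d} => phiX n k d.1 :=
  statement2_general r p n k hr hpr

end Tanabe
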